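/- Let C be a satisfiable set of constraints and let C_X be the set of constraints whose variable set meets the dep_C-equivalence class [X] of a variable X. Then C_X is a slice of C with respect to X. -/
import Mathlib


structure Constraint (Var D : Type*) where
  vars : Set Var
  finite : vars.Finite
  sat : (Var → D) → Prop
  local_ : ∀ ν ν' : Var → D, (∀ x ∈ vars, ν x = ν' x) → (sat ν ↔ sat ν')

def Sol {Var D : Type*} (X : Var) (S : Set (Constraint Var D)) : Set D :=
  {v | ∃ ν : Var → D, (∀ c ∈ S, c.sat ν) ∧ ν X = v}

/-- Explicit dependency. -/
def expl {Var D : Type*} (C : Set (Constraint Var D)) (X Y : Var) : Prop :=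
  ∃ c ∈ C, X ∈ c.vars ∧ Y ∈ c.vars

/-- Dependency relation. -/
def dep {Var D : Type*} (C : Set (Constraint Var D)) : Var → Var → Prop :=
  Relation.TransGen (expl C)

/-- `C_X`, the constraints whose variables meet the `dep_C`-class of `X`. -/
def CX {Var D : Type*} (C : Set (Constraint Var D)) (X : Var) :
    Set (Constraint Var D) :=
  {c ∈ C | (c.vars ∩ {Y | dep C X Y}).Nonempty}

/-- `C_X` is a slice of a satisfiable `C` with respect to `X`. -/
theorem stmt5 {Var D : Type*} [Nonempty D] (C : Set (Constraint Var D))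
    (X : Var) (hX : X ∈ ⋃ c ∈ C, c.vars)
    (hsat : ∃ ν : Var → D, ∀ c ∈ C, c.sat ν) :
    Sol X (CX C X) = Sol X C := by
  classical
  obtain ⟨μ, hμ⟩ := hsat
  simp only [Set.mem_iUnion] at hX
  obtain ⟨c0, hc0, hXc0⟩ := hX
  have hXX : dep C X X := Relation.TransGen.single ⟨c0, hc0, hXc0, hXc0⟩
  apply Set.Subset.antisymm
  · rintro v ⟨ν, hν, rfl⟩
    refine ⟨fun Y => if dep C X Y then ν Y else μ Y, ?_, by simp [hXX]⟩
    intro c hc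
    by_cases hcx : c ∈ CX C X
    · have hall : ∀ Y ∈ c.vars, dep C X Y := by
        obtain ⟨_, Z, hZc, hZdep⟩ := hcx
        intro Y hY
        exact hZdep.tail ⟨c, hc, hZc, hY⟩
      rw [c.local_ _ ν (fun x hx => by simp [hall x hx])]
      exact hν c hcx
    · have hnone : ∀ Y ∈ c.vars, ¬ dep C X Y := by
        intro Y hY hdep
        exact hcx ⟨hc, Y, hY, hdep⟩
      rw [c.local_ _ μ (fun x hx => by simp [hnone x hx])]
      exact hμ c hc
  · rintro v ⟨ν, hν, rfl⟩
    exact ⟨ν, fun c hc => hν c hc.1, rfl⟩
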